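/- arXiv:2211.09075 — 3 statements merged into one kernel-verified Lean document; each statement's English description precedes it below -/
import Mathlib

section
/- (Pairing Lemma) Let D be an N×N matrix over ZMod 2, V an invertible upper-triangular N×N matrix over ZMod 2, and suppose R = D·V is reduced. Write r_D(a,b) for the rank of D[≥a,≤b], with the conventions r_D(N+1,b) = 0 and r_D(a,0) = 0. Then for all 1 ≤ i, j ≤ N, the pair (i,j) is a pivot pair of R if and only if r_D(i,j) − r_D(i+1,j) + r_D(i+1,j−1) − r_D(i,j−1) = 1. -/
/-!
Right multiplication by an invertible upper-triangular `V` only adds multiples of earlier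
columns to later ones: each lower-left block of `R = D * V` is the same block of `D` times an
invertible leading principal block of `V`, so `r_D = r_R`. In the reduced matrix `R`, the pivot
pairs inside a lower-left block pick out a nonsingular triangular submatrix, and every other
column of the block vanishes; hence `r_R(a, b)` is the number of pivot pairs in the block. The
alternating sum of four such counts is, by inclusion–exclusion, the number of pivot pairs at
`(i, j)`.
-/

/-- `i` is the pivot of column `j` of `M`: the largest row index with a nonzero entry.
(Row/column `p : Fin N` corresponds to index `p+1 ∈ {1,…,N}` of the paper.) -/
def IsLow {N : ℕ} (M : Matrix (Fin N) (Fin N) (ZMod 2)) (i j : Fin N) : Prop :=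
  M i j ≠ 0 ∧ ∀ i' : Fin N, M i' j ≠ 0 → i' ≤ i

def IsReducedMat {N : ℕ} (M : Matrix (Fin N) (Fin N) (ZMod 2)) : Prop :=
  ∀ i j j' : Fin N, IsLow M i j → IsLow M i j' → j = j'

/-- `rankLL M a b` is the rank of the lower-left submatrix `M[≥ a, ≤ b]` formed by the
rows with (1-based) index `≥ a` and the columns with (1-based) index `≤ b`. -/
noncomputable def rankLL {N : ℕ} (M : Matrix (Fin N) (Fin N) (ZMod 2)) (a b : ℕ) : ℕ :=
  (Matrix.of fun (p : {p : Fin N // a ≤ (p : ℕ) + 1}) (q : {q : Fin N // (q : ℕ) + 1 ≤ b}) =>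
    M p.1 q.1).rank

def UpperTri {N : ℕ} (V : Matrix (Fin N) (Fin N) (ZMod 2)) : Prop :=
  ∀ a b : Fin N, b < a → V a b = 0

open Matrix Finset

namespace Matrix

theorem rank_eq_card_of_pivots {m n ι K : Type*} [Fintype m] [Fintype n] [Fintype ι]
    [LinearOrder m] [CommRing K] [IsDomain K] (A : Matrix m n K) (r : ι → m) (c : ι → n)
    (hr : Function.Injective r) (hpiv : ∀ x, A (r x) (c x) ≠ 0)
    (hbelow : ∀ x i, r x < i → A i (c x) = 0) (hzero : ∀ q, q ∉ Set.range c → A.col q = 0) :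
    A.rank = Fintype.card ι := by
  classical
  refine le_antisymm ?_ ?_
  · have hspan : Submodule.span K (Set.range A.col) ≤
        Submodule.span K (Set.range (A.col ∘ c)) := by
      rw [Submodule.span_le]
      rintro _ ⟨q, rfl⟩
      by_cases hq : q ∈ Set.range c
      · obtain ⟨x, rfl⟩ := hq
        exact Submodule.subset_span ⟨x, rfl⟩
      · rw [hzero q hq]
        exact zero_mem _
    have := Module.Finite.span_of_finite K (Set.finite_range (A.col ∘ c))
    rw [rank_eq_finrank_span_cols]
    exact (Submodule.finrank_mono hspan).trans (finrank_range_le_card _)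
  · -- ordered by their pivot rows, the pivot columns form an upper-triangular submatrix
    let _ : LinearOrder ι := LinearOrder.lift' r hr
    have htri : (A.submatrix r c).IsUpperTriangular := fun x y hyx => hbelow y (r x) hyx
    have hdet : (A.submatrix r c).det ≠ 0 := by
      rw [det_of_isUpperTriangular htri]
      exact prod_ne_zero_iff.2 fun x _ => hpiv x
    calc Fintype.card ι = (A.submatrix r c).rank := (rank_of_det_ne_zero hdet).symm
      _ ≤ A.rank := rank_submatrix_le A r c

theorem IsUpperTriangular.isUnit_det_submatrix {n R : Type*} [Fintype n] [LinearOrder n]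
    [CommRing R] {V : Matrix n n R} (hV : V.IsUpperTriangular) (hdet : IsUnit V.det)
    (s : Set n) [Fintype s] : IsUnit (V.submatrix ((↑) : s → n) (↑)).det := by
  rw [det_of_isUpperTriangular (hV.submatrix (f := ((↑) : s → n)))]
  rw [det_of_isUpperTriangular hV, IsUnit.prod_univ_iff] at hdet
  exact IsUnit.prod_univ_iff.2 fun i => hdet i

theorem submatrix_mul_of_isUpperTriangular {l m n R : Type*} [Fintype n] [LinearOrder n]
    [Semiring R] (D : Matrix m n R) {V : Matrix n n R} (hV : V.IsUpperTriangular) (f : l → m)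
    {s : Set n} [Fintype s] (hs : IsLowerSet s) :
    (D * V).submatrix f ((↑) : s → n) =
      D.submatrix f ((↑) : s → n) * V.submatrix ((↑) : s → n) ((↑) : s → n) := by
  ext p q
  simp only [submatrix_apply, mul_apply]
  rw [← Finset.sum_subtype s.toFinset (fun _ => Set.mem_toFinset) fun k => D (f p) k * V k q]
  refine (sum_subset (subset_univ _) fun k _ hk => ?_).symm
  rw [hV (lt_of_not_ge fun hkq => Set.mem_toFinset.not.1 hk (hs hkq q.2)), mul_zero]

end Matrix

section Pivots

variable {N : ℕ}

theorem rankLL_mul_of_upperTri (D : Matrix (Fin N) (Fin N) (ZMod 2))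
    {V : Matrix (Fin N) (Fin N) (ZMod 2)} (hV : IsUnit V) (hVt : UpperTri V) (a b : ℕ) :
    rankLL (D * V) a b = rankLL D a b := by
  have hs : IsLowerSet {q : Fin N | (q : ℕ) + 1 ≤ b} := fun _ _ hkq hq =>
    (Nat.succ_le_succ hkq).trans hq
  have hdet := IsUpperTriangular.isUnit_det_submatrix hVt ((isUnit_iff_isUnit_det V).mp hV)
    {q : Fin N | (q : ℕ) + 1 ≤ b}
  exact (congrArg rank (submatrix_mul_of_isUpperTriangular D hVt Subtype.val hs)).trans
    (rank_mul_eq_left_of_isUnit_det _ _ hdet)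

theorem exists_isLow_of_ne_zero {R : Matrix (Fin N) (Fin N) (ZMod 2)} {p q : Fin N}
    (h : R p q ≠ 0) : ∃ p', p ≤ p' ∧ IsLow R p' q := by
  classical
  obtain ⟨p', hp', hmax⟩ := exists_max_image {i | R i q ≠ 0} id ⟨p, by simpa using h⟩
  simp only [mem_filter, mem_univ, true_and, id] at hp' hmax
  exact ⟨p', hmax p h, hp', hmax⟩

open Classical in
noncomputable def pivotPairs (R : Matrix (Fin N) (Fin N) (ZMod 2)) : Finset (Fin N × Fin N) :=
  {x | IsLow R x.1 x.2}

@[simp]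
theorem mem_pivotPairs {R : Matrix (Fin N) (Fin N) (ZMod 2)} {p q : Fin N} :
    (p, q) ∈ pivotPairs R ↔ IsLow R p q := by
  simp [pivotPairs]

def lowerLeftCount (s : Finset (Fin N × Fin N)) (a b : ℕ) : ℕ :=
  #{x ∈ s | a ≤ (x.1 : ℕ) + 1 ∧ (x.2 : ℕ) + 1 ≤ b}

theorem rankLL_eq_lowerLeftCount {R : Matrix (Fin N) (Fin N) (ZMod 2)} (hR : IsReducedMat R)
    (a b : ℕ) : rankLL R a b = lowerLeftCount (pivotPairs R) a b := by
  set T := {x ∈ pivotPairs R | a ≤ (x.1 : ℕ) + 1 ∧ (x.2 : ℕ) + 1 ≤ b}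
  have hT : ∀ {x}, x ∈ T ↔ IsLow R x.1 x.2 ∧ a ≤ (x.1 : ℕ) + 1 ∧ (x.2 : ℕ) + 1 ≤ b := by
    simp [T]
  refine (rank_eq_card_of_pivots _ (fun x : T => ⟨x.1.1, (hT.1 x.2).2.1⟩)
    (fun x : T => ⟨x.1.2, (hT.1 x.2).2.2⟩) (fun x y hxy => ?_) (fun x => (hT.1 x.2).1.1)
    (fun x i hi => ?_) (fun q hq => ?_)).trans (Fintype.card_coe T)
  · have hrow : x.1.1 = y.1.1 := congrArg Subtype.val hxy
    have hlow := (hT.1 y.2).1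
    rw [← hrow] at hlow
    exact Subtype.ext (Prod.ext hrow (hR _ _ _ (hT.1 x.2).1 hlow))
  · by_contra h
    exact not_le.2 hi ((hT.1 x.2).1.2 i h)
  · funext p
    by_contra h
    obtain ⟨p', hpp', hlow⟩ := exists_isLow_of_ne_zero (R := R) (p := p.1) (q := q.1) h
    have hp'a : a ≤ (p' : ℕ) + 1 := p.2.trans (Nat.succ_le_succ hpp')
    exact hq ⟨⟨(p', q.1), hT.2 ⟨hlow, hp'a, q.2⟩⟩, rfl⟩

theorem lowerLeftCount_alternating (s : Finset (Fin N × Fin N)) (i j : Fin N) :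
    (lowerLeftCount s ((i : ℕ) + 1) ((j : ℕ) + 1) : ℤ)
      - lowerLeftCount s ((i : ℕ) + 2) ((j : ℕ) + 1)
      + lowerLeftCount s ((i : ℕ) + 2) j - lowerLeftCount s ((i : ℕ) + 1) j
      = if (i, j) ∈ s then 1 else 0 := by
  classical
  simp only [lowerLeftCount, card_filter]
  push_cast
  rw [← sum_sub_distrib, ← sum_add_distrib, ← sum_sub_distrib,
    ← sum_ite_eq' s (i, j) fun _ => (1 : ℤ)]
  refine sum_congr rfl fun x _ => ?_
  obtain ⟨p, q⟩ := x
  simp only [Prod.mk.injEq, ← Fin.val_inj]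
  split_ifs <;> omega

end Pivots

/-- With `i : Fin N` standing for the paper's index `i+1`, the paper's `r_D(i+1, ·)` and
`r_D(·, j−1)` are `rankLL D ((i : ℕ) + 2) ·` and `rankLL D · (j : ℕ)`. -/
theorem pairing_lemma {N : ℕ} (D V : Matrix (Fin N) (Fin N) (ZMod 2))
    (hV : IsUnit V) (hVt : UpperTri V) (hR : IsReducedMat (D * V)) :
    ∀ i j : Fin N,
      IsLow (D * V) i j ↔
        ((rankLL D ((i : ℕ) + 1) ((j : ℕ) + 1) : ℤ)
          - (rankLL D ((i : ℕ) + 2) ((j : ℕ) + 1) : ℤ)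
          + (rankLL D ((i : ℕ) + 2) (j : ℕ) : ℤ)
          - (rankLL D ((i : ℕ) + 1) (j : ℕ) : ℤ)) = 1 := by
  intro i j
  simp only [← rankLL_mul_of_upperTri D hV hVt, rankLL_eq_lowerLeftCount hR,
    lowerLeftCount_alternating]
  split_ifs with h <;> simpa using h
end

section
/- (Correctness of the right-to-left additions in the retrospective reduction) Let M be a reduced N×N matrix over ZMod 2 and let k < ℓ be column indices with M_k and M_ℓ nonzero and low(M_ℓ) < low(M_k). Let M' be the matrix obtained from M by replacing column k with M_k + M_ℓ (leaving all other columns unchanged). Then M' is reduced, low(M'_k) = low(M_k), and for all 1 ≤ i ≤ N and 1 ≤ m ≤ N, rank M'[≥i,≤m] = rank M[≥i,≤m]. -/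
theorem linearIndependent_of_injective_pivot {R ι ρ : Type*} [Ring R] [NoZeroDivisors R]
    [LinearOrder ρ] (v : ι → ρ → R) (piv : ι → ρ) (hinj : Function.Injective piv)
    (hpiv : ∀ j, v j (piv j) ≠ 0) (hle : ∀ j r, v j r ≠ 0 → r ≤ piv j) :
    LinearIndependent R v := by
  classical
  rw [linearIndependent_iff']
  intro s g hsum j hjs
  by_contra hj
  obtain ⟨j₀, hj₀, hmax⟩ :=
    (s.filter (g · ≠ 0)).exists_max_image piv ⟨j, Finset.mem_filter.2 ⟨hjs, hj⟩⟩
  rw [Finset.mem_filter] at hj₀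
  have hvanish : ∀ i ∈ s, i ≠ j₀ → g i * v i (piv j₀) = 0 := by
    intro i his hne
    by_cases hgi : g i = 0
    · rw [hgi, zero_mul]
    by_contra h
    exact hne (hinj (le_antisymm (hmax i (Finset.mem_filter.2 ⟨his, hgi⟩))
      (hle i _ (right_ne_zero_of_mul h))))
  have hsum₀ := congrFun hsum (piv j₀)
  simp only [Finset.sum_apply, Pi.smul_apply, smul_eq_mul, Pi.zero_apply] at hsum₀
  rw [Finset.sum_eq_single_of_mem j₀ hj₀.1 hvanish] at hsum₀
  exact mul_ne_zero hj₀.2 (hpiv j₀) hsum₀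

section Pivots

variable {N : ℕ} {M : Matrix (Fin N) (Fin N) (ZMod 2)}

theorem IsLow.unique {i i' j : Fin N} (h : IsLow M i j) (h' : IsLow M i' j) : i = i' :=
  le_antisymm (h'.2 i h.1) (h.2 i' h'.1)

theorem exists_isLow_of_ne_zero_s8 {p j : Fin N} (hp : M p j ≠ 0) : ∃ i, p ≤ i ∧ IsLow M i j := by
  classical
  obtain ⟨i, hi, hmax⟩ := (Finset.univ.filter (M · j ≠ 0)).exists_max_image id
    ⟨p, Finset.mem_filter.2 ⟨Finset.mem_univ p, hp⟩⟩
  have hmax' : ∀ i', M i' j ≠ 0 → i' ≤ i := fun i' h =>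
    hmax i' (Finset.mem_filter.2 ⟨Finset.mem_univ i', h⟩)
  exact ⟨i, hmax' p hp, (Finset.mem_filter.1 hi).2, hmax'⟩

theorem rankLL_eq_card_pivots (hM : IsReducedMat M) (a b : ℕ) :
    rankLL M a b = Nat.card
      {x : Fin N × Fin N // a ≤ (x.1 : ℕ) + 1 ∧ (x.2 : ℕ) + 1 ≤ b ∧ IsLow M x.1 x.2} := by
  classical
  set S := Matrix.of fun (p : {p : Fin N // a ≤ (p : ℕ) + 1})
    (q : {q : Fin N // (q : ℕ) + 1 ≤ b}) => M p.1 q.1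
  let T := {x : {p : Fin N // a ≤ (p : ℕ) + 1} × {q : Fin N // (q : ℕ) + 1 ≤ b} //
    IsLow M x.1 x.2}
  have hspan : Submodule.span (ZMod 2) (Set.range S.col) =
      Submodule.span (ZMod 2) (Set.range fun t : T => S.col t.1.2) := by
    refine le_antisymm (Submodule.span_le.2 ?_) (Submodule.span_mono ?_)
    · rintro _ ⟨q, rfl⟩
      by_cases hq : S.col q = 0
      · rw [hq]; exact Submodule.zero_mem _
      obtain ⟨p, hp⟩ := Function.ne_iff.1 hq
      obtain ⟨i, hpi, hi⟩ := exists_isLow_of_ne_zero_s8 (M := M) hp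
      have hai : a ≤ (i : ℕ) + 1 := p.2.trans (Nat.succ_le_succ hpi)
      exact Submodule.subset_span ⟨⟨(⟨i, hai⟩, q), hi⟩, rfl⟩
    · rintro _ ⟨t, rfl⟩
      exact ⟨t.1.2, rfl⟩
  have hli : LinearIndependent (ZMod 2) fun t : T => S.col t.1.2 := by
    refine linearIndependent_of_injective_pivot _ (fun t => t.1.1) ?_ (fun t => t.2.1)
      fun t r hr => Subtype.coe_le_coe.1 (t.2.2 r.1 hr)
    rintro ⟨⟨i, q⟩, h⟩ ⟨⟨i', q'⟩, h'⟩ (rfl : i = i')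
    obtain rfl : q = q' := Subtype.ext (hM i q q' h h')
    rfl
  let e : T ≃ {x : Fin N × Fin N // a ≤ (x.1 : ℕ) + 1 ∧ (x.2 : ℕ) + 1 ≤ b ∧ IsLow M x.1 x.2} :=
    { toFun := fun t => ⟨(t.1.1.1, t.1.2.1), t.1.1.2, t.1.2.2, t.2⟩
      invFun := fun x => ⟨(⟨x.1.1, x.2.1⟩, ⟨x.1.2, x.2.2.1⟩), x.2.2.2⟩
      left_inv := fun _ => rfl
      right_inv := fun _ => rfl }
  rw [rankLL, Matrix.rank_eq_finrank_span_cols, hspan, finrank_span_eq_card hli,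
    ← Nat.card_eq_fintype_card, Nat.card_congr e]

theorem rankLL_congr {M' : Matrix (Fin N) (Fin N) (ZMod 2)} (hM' : IsReducedMat M')
    (hM : IsReducedMat M) (h : ∀ i j, IsLow M' i j ↔ IsLow M i j) (a b : ℕ) :
    rankLL M' a b = rankLL M a b := by
  simp only [rankLL_eq_card_pivots hM, rankLL_eq_card_pivots hM', h]

theorem isReducedMat_congr {M' : Matrix (Fin N) (Fin N) (ZMod 2)}
    (h : ∀ i j, IsLow M' i j ↔ IsLow M i j) : IsReducedMat M' ↔ IsReducedMat M := by
  simp only [IsReducedMat, h]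

theorem IsLow.updateCol_add {v : Fin N → ZMod 2} {i k : Fin N} (hi : IsLow M i k)
    (hv : ∀ p, v p ≠ 0 → p < i) : IsLow (M.updateCol k (M.col k + v)) i k := by
  have hvi : v i = 0 := not_not.1 fun h => (hv i h).false
  refine ⟨by simpa [hvi] using hi.1, fun p hp => ?_⟩
  by_cases hMp : M p k = 0
  · simp only [Matrix.updateCol_self, Pi.add_apply, Matrix.col_apply, hMp, zero_add] at hp
    exact (hv p hp).le
  · exact hi.2 p hMp

theorem isLow_updateCol_iff {c : Fin N → ZMod 2} {i₀ k : Fin N} (h : IsLow M i₀ k)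
    (h' : IsLow (M.updateCol k c) i₀ k) (i j : Fin N) :
    IsLow (M.updateCol k c) i j ↔ IsLow M i j := by
  by_cases hj : j = k
  · subst hj
    exact ⟨fun hc => hc.unique h' ▸ h, fun hc => hc.unique h ▸ h'⟩
  · simp only [IsLow, Matrix.updateCol_ne hj]

end Pivots

theorem retrospective_step_correct_general {N : ℕ} (M M' : Matrix (Fin N) (Fin N) (ZMod 2))
    (hM : IsReducedMat M) (k l : Fin N)
    (ik il : Fin N) (hik : IsLow M ik k) (hil : IsLow M il l) (hlow : il < ik)
    (hM' : M' = Matrix.of fun p q => if q = k then M p k + M p l else M p q) :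
    IsReducedMat M' ∧ IsLow M' ik k ∧
      ∀ i m : Fin N,
        rankLL M' ((i : ℕ) + 1) ((m : ℕ) + 1) = rankLL M ((i : ℕ) + 1) ((m : ℕ) + 1) := by
  have hM'_eq : M' = M.updateCol k (M.col k + M.col l) := by
    ext p q
    simp [hM', Matrix.updateCol_apply]
  subst hM'_eq
  have hik' : IsLow (M.updateCol k (M.col k + M.col l)) ik k :=
    hik.updateCol_add fun p hp => (hil.2 p hp).trans_lt hlow
  have hpiv := isLow_updateCol_iff hik hik'
  have hred := (isReducedMat_congr hpiv).2 hM
  exact ⟨hred, hik', fun i m => rankLL_congr hred hM hpiv _ _⟩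

/-- Correctness of the right-to-left additions of the retrospective reduction: if `M` is
reduced, `k < l`, columns `k` and `l` are nonzero and `low(M_l) < low(M_k)`, then adding
column `l` to column `k` yields a reduced matrix in which the pivot of column `k` is
unchanged and the ranks of all lower-left submatrices are preserved. -/
theorem retrospective_step_correct {N : ℕ} (M M' : Matrix (Fin N) (Fin N) (ZMod 2))
    (hM : IsReducedMat M) (k l : Fin N) (hkl : k < l)
    (ik il : Fin N) (hik : IsLow M ik k) (hil : IsLow M il l) (hlow : il < ik)
    (hM' : M' = Matrix.of fun p q => if q = k then M p k + M p l else M p q) :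
    IsReducedMat M' ∧ IsLow M' ik k ∧
      ∀ i m : Fin N,
        rankLL M' ((i : ℕ) + 1) ((m : ℕ) + 1) = rankLL M ((i : ℕ) + 1) ((m : ℕ) + 1) :=
  retrospective_step_correct_general M M' hM k l ik il hik hil hlow hM'
end

section
/- Let D be an N×N matrix over ZMod 2, V an invertible upper-triangular N×N matrix over ZMod 2 with R = D·V reduced. Then for every 1 ≤ j ≤ N, the number of nonzero columns among R_1, …, R_j equals the rank of the submatrix of D formed by its first j columns. -/
open Matrix

theorem linearIndependent_of_injective_pivot_s15 {K m ι : Type*} [Ring K] [NoZeroDivisors K]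
    [LinearOrder m] (v : ι → m → K) (pivot : ι → m) (hinj : Function.Injective pivot)
    (hne : ∀ k, v k (pivot k) ≠ 0) (hzero : ∀ k r, pivot k < r → v k r = 0) :
    LinearIndependent K v := by
  classical
  rw [linearIndependent_iff']
  intro s g hsum
  by_contra! hg
  obtain ⟨k₀, hk₀, hmax⟩ := (s.filter fun k => g k ≠ 0).exists_max_image pivot
    (by simpa [Finset.filter_nonempty_iff] using hg)
  rw [Finset.mem_filter] at hk₀
  -- `pivot k₀` is the largest pivot with a nonzero coefficient, so only `v k₀` survives in that row
  have hrow : ∑ k ∈ s, g k * v k (pivot k₀) = g k₀ * v k₀ (pivot k₀) := by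
    refine Finset.sum_eq_single_of_mem k₀ hk₀.1 fun k hk hne₀ => ?_
    by_cases hgk : g k = 0
    · rw [hgk, zero_mul]
    · have hlt : pivot k < pivot k₀ :=
        (hmax k (Finset.mem_filter.2 ⟨hk, hgk⟩)).lt_of_ne (hinj.ne hne₀)
      rw [hzero k _ hlt, mul_zero]
  have hrow₀ := congrFun hsum (pivot k₀)
  simp only [Finset.sum_apply, Pi.smul_apply, smul_eq_mul, Pi.zero_apply, hrow] at hrow₀
  exact mul_ne_zero hk₀.2 (hne k₀) hrow₀

theorem Matrix.rank_eq_card_nonzero_cols {K m n : Type*} [Field K] [Fintype n]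
    (A : Matrix m n K) (h : LinearIndependent K fun k : {k // A.col k ≠ 0} => A.col k) :
    A.rank = Nat.card {k // A.col k ≠ 0} := by
  classical
  have hrange : Set.range A.col \ {0} = Set.range fun k : {k // A.col k ≠ 0} => A.col k := by
    ext x
    simp only [Set.mem_sdiff, Set.mem_range, Set.mem_singleton_iff, Subtype.exists]
    constructor
    · rintro ⟨⟨k, rfl⟩, hk⟩
      exact ⟨k, hk, rfl⟩
    · rintro ⟨k, hk, rfl⟩
      exact ⟨⟨k, rfl⟩, hk⟩
  rw [rank_eq_finrank_span_cols, ← Submodule.span_sdiff_singleton_zero, hrange,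
    finrank_span_eq_card h, Nat.card_eq_fintype_card]

namespace Matrix.IsUpperTriangular

variable {α n : Type*} [LinearOrder n] [Fintype n]

theorem mul_submatrix_Iic {m : Type*} [NonUnitalNonAssocSemiring α] {V : Matrix n n α}
    (hV : V.IsUpperTriangular) (D : Matrix m n α) (j : n) :
    (D * V).submatrix id (Subtype.val : {q // q ≤ j} → n) =
      D.submatrix id (Subtype.val : {q // q ≤ j} → n) *
        V.submatrix (Subtype.val : {q // q ≤ j} → n) Subtype.val := by
  ext p q
  simp only [mul_apply, submatrix_apply, id]
  have hlow : ∑ r : {r // ¬r ≤ j}, D p r * V r q = 0 :=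
    Fintype.sum_eq_zero _ fun r => by rw [hV (q.2.trans_lt (not_le.1 r.2)), mul_zero]
  rw [← Fintype.sum_subtype_add_sum_subtype (· ≤ j), hlow, add_zero]

theorem isUnit_det_submatrix_s15 [CommRing α] [DecidableEq n] {V : Matrix n n α}
    (hV : V.IsUpperTriangular) (hdet : IsUnit V.det) (p : n → Prop) [DecidablePred p] :
    IsUnit (V.submatrix (Subtype.val : Subtype p → n) Subtype.val).det := by
  have hsub : (V.submatrix (Subtype.val : Subtype p → n) Subtype.val).IsUpperTriangular :=
    fun _ _ h => hV h
  rw [det_of_isUpperTriangular hV, IsUnit.prod_univ_iff] at hdet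
  rw [det_of_isUpperTriangular hsub, IsUnit.prod_univ_iff]
  exact fun i => hdet i

end Matrix.IsUpperTriangular

theorem exists_isLow_of_col_ne_zero {N : ℕ} {M : Matrix (Fin N) (Fin N) (ZMod 2)} {k : Fin N}
    (hk : M.col k ≠ 0) : ∃ i, IsLow M i k := by
  classical
  obtain ⟨i, hi⟩ := Function.ne_iff.1 hk
  obtain ⟨i₀, hi₀, hmax⟩ := (Finset.univ.filter fun i => M i k ≠ 0).exists_max_image id
    ⟨i, Finset.mem_filter.2 ⟨Finset.mem_univ i, hi⟩⟩
  exact ⟨i₀, (Finset.mem_filter.1 hi₀).2,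
    fun i' hi' => hmax i' (Finset.mem_filter.2 ⟨Finset.mem_univ i', hi'⟩)⟩

theorem IsReducedMat.linearIndependent_cols {N : ℕ} {M : Matrix (Fin N) (Fin N) (ZMod 2)}
    (hM : IsReducedMat M) {ι : Type*} (c : ι → Fin N) (hc : Function.Injective c)
    (hne : ∀ k, M.col (c k) ≠ 0) : LinearIndependent (ZMod 2) fun k => M.col (c k) := by
  choose pivot hpivot using fun k => exists_isLow_of_col_ne_zero (hne k)
  refine linearIndependent_of_injective_pivot_s15 _ pivot (fun k k' h => hc ?_)
    (fun k => (hpivot k).1) (fun k r hr => ?_)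
  · exact hM _ _ _ (hpivot k) (h ▸ hpivot k')
  · by_contra hrk
    exact hr.not_ge ((hpivot k).2 r hrk)

/-- For a reduction `R = D * V` (`V` invertible upper-triangular, `R` reduced), the number
of nonzero columns among `R_1, …, R_j` equals the rank of the submatrix of `D` formed by
its first `j` columns. -/
theorem card_nonzero_columns_eq_rank {N : ℕ} (D V : Matrix (Fin N) (Fin N) (ZMod 2))
    (hV : IsUnit V) (hVt : UpperTri V) (hR : IsReducedMat (D * V)) :
    ∀ j : Fin N,
      Nat.card {k : Fin N // k ≤ j ∧ (fun p => (D * V) p k) ≠ 0} =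
        (Matrix.of fun (p : Fin N) (q : {q : Fin N // q ≤ j}) => D p q.1).rank := by
  intro j
  set Rj := (D * V).submatrix id (Subtype.val : {q // q ≤ j} → Fin N)
  calc Nat.card {k : Fin N // k ≤ j ∧ (fun p => (D * V) p k) ≠ 0}
      = Nat.card {k // Rj.col k ≠ 0} :=
        Nat.card_congr (Equiv.subtypeSubtypeEquivSubtypeInter _ _).symm
    _ = Rj.rank := (Rj.rank_eq_card_nonzero_cols <| hR.linearIndependent_cols _
        (Subtype.val_injective.comp Subtype.val_injective) fun k => k.2).symm
    _ = _ := by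
        rw [show Rj = _ from IsUpperTriangular.mul_submatrix_Iic hVt D j,
          rank_mul_eq_left_of_isUnit_det _ _ <|
            IsUpperTriangular.isUnit_det_submatrix_s15 hVt ((isUnit_iff_isUnit_det V).1 hV) (· ≤ j)]
        rfl
end
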